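/- Let f: ℝ^p → ℝ be differentiable and suppose −f − (σ/2)‖·‖² is convex for some σ ∈ ℝ. Then for every γ > 0 with 1 + γσ > 0 and every s ∈ ℝ^p, the function w ↦ −f(w) + (1/(2γ))‖w − s‖² has a unique minimizer u, and u is characterized by the equation s = u − γ∇f(u); in particular the map id − γ∇f: ℝ^p → ℝ^p is a bijection whose inverse is prox_{−γf}. -/

import Mathlib

open scoped InnerProductSpace
noncomputable section

/-- `ℝ^p` as a Euclidean space. -/
abbrev Euc (p : ℕ) := EuclideanSpace ℝ (Fin p)

variable {p : ℕ}

/-- `u` minimizes `w ↦ −f(w) + (1/(2γ))‖w − s‖²` (for real-valued `f`). -/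
def NegProxObjMin (f : Euc p → ℝ) (γ : ℝ) (s u : Euc p) : Prop :=
  ∀ w, -f u + 1/(2*γ) * ‖u - s‖^2 ≤ -f w + 1/(2*γ) * ‖w - s‖^2

/-! The objective `w ↦ -f w + ‖w - s‖² / (2γ)` is the `σ`-strongly convex function `-f` plus a
`1/γ`-strongly convex quadratic, hence `(σ + 1/γ)`-strongly convex, and `σ + 1/γ = (1 + γσ)/γ > 0`.
A differentiable strongly convex function is coercive, so on a finite-dimensional space it has a
minimizer, unique by strict convexity; and its minimizers are exactly the zeros of its gradient
`-∇f u + (u - s)/γ`, i.e. the solutions of `s = u - γ∇f u`. -/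

open Filter Set

theorem ConvexOn.add_fderiv_sub_le {E : Type*} [NormedAddCommGroup E] [NormedSpace ℝ E]
    {h : E → ℝ} {h' : E →L[ℝ] ℝ} {x : E} (hc : ConvexOn ℝ univ h) (hd : HasFDerivAt h h' x)
    (y : E) : h x + h' (y - x) ≤ h y := by
  have hline : ConvexOn ℝ univ (h ∘ AffineMap.lineMap (k := ℝ) x y) := by
    simpa using hc.comp_affineMap (AffineMap.lineMap x y)
  have hderiv : HasDerivAt (h ∘ AffineMap.lineMap (k := ℝ) x y) (h' (y - x)) 0 := by
    refine HasFDerivAt.comp_hasDerivAt (0 : ℝ) ?_ AffineMap.hasDerivAt_lineMap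
    simpa using hd
  have hslope := hline.le_slope_of_hasDerivAt (mem_univ 0) (mem_univ 1) one_pos hderiv
  simp only [slope_def_field, Function.comp_apply, AffineMap.lineMap_apply_one,
    AffineMap.lineMap_apply_zero, sub_zero, div_one] at hslope
  linarith

section InnerProductSpace

variable {E : Type*} [NormedAddCommGroup E] [InnerProductSpace ℝ E] {φ : E → ℝ} {m : ℝ}

theorem StrongConvexOn.add_const_mul_norm_sub_sq (hφ : StrongConvexOn univ m φ) (c : ℝ) (s : E) :
    StrongConvexOn univ (m + 2 * c) (fun x => φ x + c * ‖x - s‖ ^ 2) := by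
  rw [strongConvexOn_iff_convex] at hφ ⊢
  have haffine : ConvexOn ℝ univ (fun x => (-(2 * c) • innerₛₗ ℝ s) x + c * ‖s‖ ^ 2) :=
    (LinearMap.convexOn _ convex_univ).add_const _
  refine (hφ.add haffine).congr fun x _ => ?_
  simp only [Pi.add_apply, LinearMap.smul_apply, innerₛₗ_apply_apply, smul_eq_mul, norm_sub_sq_real,
    real_inner_comm s x]
  ring

variable [CompleteSpace E] {g x : E}

theorem HasGradientAt.neg (hg : HasGradientAt φ g x) : HasGradientAt (fun y => -φ y) (-g) x := by
  rw [hasGradientAt_iff_hasFDerivAt, map_neg]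
  exact hg.hasFDerivAt.neg

theorem HasGradientAt.add_const_mul_norm_sub_sq (hg : HasGradientAt φ g x) (c : ℝ) (s : E) :
    HasGradientAt (fun y => φ y + c * ‖y - s‖ ^ 2) (g + (2 * c) • (x - s)) x := by
  rw [hasGradientAt_iff_hasFDerivAt] at hg ⊢
  refine (hg.add (((hasFDerivAt_id x).sub_const s).norm_sq.const_mul c)).congr_fderiv ?_
  ext y
  simp only [id_eq, map_sub, ContinuousLinearMap.comp_id, add_apply,
    InnerProductSpace.toDual_apply_apply, smul_apply, sub_apply, coe_innerSL_apply, nsmul_eq_mul,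
    Nat.cast_ofNat, smul_eq_mul, map_add, map_smul, add_right_inj]
  ring

theorem StrongConvexOn.add_inner_add_sq_le (hφ : StrongConvexOn univ m φ)
    (hg : HasGradientAt φ g x) (y : E) :
    φ x + ⟪g, y - x⟫_ℝ + m / 2 * ‖y - x‖ ^ 2 ≤ φ y := by
  have hsq : ‖y‖ ^ 2 = ‖x‖ ^ 2 + 2 * ⟪x, y - x⟫_ℝ + ‖y - x‖ ^ 2 := by
    simpa using norm_add_sq_real x (y - x)
  have hconv := (strongConvexOn_iff_convex.mp hφ).add_fderiv_sub_le
    (hg.hasFDerivAt.sub ((hasFDerivAt_id x).norm_sq.const_mul (m / 2))) y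
  simp only [sub_apply, smul_apply, InnerProductSpace.toDual_apply_apply,
    ContinuousLinearMap.coe_comp, Function.comp_apply, ContinuousLinearMap.coe_id', id_eq,
    innerSL_apply_apply, smul_eq_mul, nsmul_eq_mul, Nat.cast_ofNat, hsq] at hconv
  linarith

theorem IsLocalMin.hasGradientAt_eq_zero (h : IsLocalMin φ x) (hg : HasGradientAt φ g x) :
    g = 0 := by
  simpa using h.hasFDerivAt_eq_zero hg.hasFDerivAt

theorem StrongConvexOn.isMinOn_univ_iff_hasGradientAt_zero (hφ : StrongConvexOn univ m φ)
    (hm : 0 ≤ m) (hg : HasGradientAt φ g x) : IsMinOn φ univ x ↔ g = 0 := by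
  refine ⟨fun hmin => (hmin.isLocalMin univ_mem).hasGradientAt_eq_zero hg, ?_⟩
  rintro rfl
  refine isMinOn_univ_iff.mpr fun y => ?_
  have hle := hφ.add_inner_add_sq_le hg y
  rw [inner_zero_left, add_zero] at hle
  linarith [show 0 ≤ m / 2 * ‖y - x‖ ^ 2 by positivity]

theorem StrongConvexOn.exists_isMinOn_univ [ProperSpace E] (hφ : StrongConvexOn univ m φ)
    (hm : 0 < m) (hc : Continuous φ) (hg : HasGradientAt φ g x) : ∃ x₀, IsMinOn φ univ x₀ := by
  have hbound : ∀ y, φ x + dist y x * (m / 2 * dist y x + -‖g‖) ≤ φ y := fun y => by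
    have hcs : -(‖g‖ * ‖y - x‖) ≤ ⟪g, y - x⟫_ℝ := neg_le_of_abs_le (abs_real_inner_le_norm g _)
    rw [dist_eq_norm]
    nlinarith [hφ.add_inner_add_sq_le hg y]
  have hquad : Tendsto (fun r => φ x + r * (m / 2 * r + -‖g‖)) atTop atTop :=
    tendsto_atTop_add_const_left _ _ <| tendsto_id.atTop_mul_atTop₀ <|
      tendsto_atTop_add_const_right _ _ <| tendsto_id.const_mul_atTop (by positivity)
  obtain ⟨x₀, hx₀⟩ := hc.exists_forall_le <|
    tendsto_atTop_mono hbound (hquad.comp (tendsto_dist_right_cocompact_atTop x))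
  exact ⟨x₀, isMinOn_univ_iff.mpr hx₀⟩

theorem StrongConvexOn.existsUnique_isMinOn_univ [ProperSpace E] (hφ : StrongConvexOn univ m φ)
    (hm : 0 < m) (hc : Continuous φ) (hg : HasGradientAt φ g x) : ∃! x₀, IsMinOn φ univ x₀ :=
  let ⟨x₀, hx₀⟩ := hφ.exists_isMinOn_univ hm hc hg
  ⟨x₀, hx₀, fun _ hy => (hφ.strictConvexOn hm).eq_of_isMinOn hy hx₀ trivial trivial⟩

end InnerProductSpace

theorem negProxObjMin_iff_isMinOn {f : Euc p → ℝ} {γ : ℝ} {s u : Euc p} :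
    NegProxObjMin f γ s u ↔ IsMinOn (fun w => -f w + 1 / (2 * γ) * ‖w - s‖ ^ 2) univ u := by
  rw [NegProxObjMin, isMinOn_univ_iff]

/-- if `−f − (σ/2)‖·‖²` is convex and `1 + γσ > 0`, `γ > 0`, then for every `s`
the function `w ↦ −f(w) + (1/(2γ))‖w − s‖²` has a unique minimizer `u`, characterized by
`s = u − γ∇f(u)`; in particular `id − γ∇f` is a bijection (whose inverse is `prox_{−γf}`). -/
theorem statement7
    (f : Euc p → ℝ) (f' : Euc p → Euc p)
    (hf : ∀ x, HasGradientAt f (f' x) x)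
    (σ : ℝ) (hconv : ConvexOn ℝ Set.univ (fun x => -f x - σ/2 * ‖x‖^2))
    (γ : ℝ) (hγ : 0 < γ) (hγσ : 0 < 1 + γ * σ) :
    (∀ s : Euc p, ∃! u : Euc p, NegProxObjMin f γ s u) ∧
      (∀ s u : Euc p, NegProxObjMin f γ s u ↔ s = u - γ • f' u) ∧
      Function.Bijective (fun u : Euc p => u - γ • f' u) := by
  have hm : 0 < σ + 2 * (1 / (2 * γ)) := by
    rw [show σ + 2 * (1 / (2 * γ)) = (1 + γ * σ) / γ by field_simp; ring]
    positivity
  have hstrong (s : Euc p) :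
      StrongConvexOn univ (σ + 2 * (1 / (2 * γ))) (fun w => -f w + 1 / (2 * γ) * ‖w - s‖ ^ 2) :=
    (strongConvexOn_iff_convex.mpr hconv).add_const_mul_norm_sub_sq _ s
  have hgrad (s u : Euc p) := (hf u).neg.add_const_mul_norm_sub_sq (1 / (2 * γ)) s
  have hchar (s u : Euc p) : NegProxObjMin f γ s u ↔ s = u - γ • f' u := by
    rw [negProxObjMin_iff_isMinOn,
      (hstrong s).isMinOn_univ_iff_hasGradientAt_zero hm.le (hgrad s u),
      show 2 * (1 / (2 * γ)) = γ⁻¹ by field_simp, neg_add_eq_zero, eq_inv_smul_iff₀ hγ.ne',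
      eq_sub_iff_add_eq, eq_sub_iff_add_eq, add_comm]
  have hunique (s : Euc p) : ∃! u, NegProxObjMin f γ s u := by
    simpa only [negProxObjMin_iff_isMinOn] using (hstrong s).existsUnique_isMinOn_univ hm
      (continuous_iff_continuousAt.mpr fun u => (hgrad s u).continuousAt) (hgrad s 0)
  refine ⟨hunique, hchar, (Function.bijective_iff_existsUnique _).mpr fun s => ?_⟩
  simpa only [hchar, eq_comm] using hunique s
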